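/- Let X be a geodesic metric space that is δ-hyperbolic with δ > 0, let C ⊆ X be a ρ-separated subset with ρ ≥ 20δ, and fix R with 2 + 2δ ≤ R ≤ ρ/2 − 3δ. Then the Behrstock inequality (axiom (P2)) holds for the projection distances {d_p}_{p∈C} with projection constant 4δ: for pairwise distinct a, b, c ∈ C, if d_a(b,c) > 4δ then d_b(a,c) ≤ 4δ. -/

import Mathlib

open Set

/-- A geodesic from `x` to `y`: an isometric embedding of `[0, dist x y]` with the
prescribed endpoints. -/
def IsGeodesicFrom {X : Type*} [MetricSpace X] (γ : ℝ → X) (x y : X) : Prop :=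
  γ 0 = x ∧ γ (dist x y) = y ∧
    ∀ s ∈ Icc (0:ℝ) (dist x y), ∀ t ∈ Icc (0:ℝ) (dist x y), dist (γ s) (γ t) = |s - t|

/-- A geodesic metric space: every pair of points is joined by a geodesic. -/
def GeodesicMetricSpace (X : Type*) [MetricSpace X] : Prop :=
  ∀ x y : X, ∃ γ : ℝ → X, IsGeodesicFrom γ x y

/-- The Gromov product `(b,c)_a`. -/
noncomputable def gromovProd {X : Type*} [MetricSpace X] (a b c : X) : ℝ :=
  (dist a b + dist a c - dist b c) / 2

/-- `δ`-hyperbolicity via `δ`-thin triangles: two sides of a geodesic triangle issuing from a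
common vertex stay `δ`-close up to the Gromov product (this is exactly the condition that
pairs of points of the triangle with the same image in the comparison tripod are `δ`-close). -/
def DeltaThin (X : Type*) [MetricSpace X] (δ : ℝ) : Prop :=
  ∀ (a b c : X) (γ₁ γ₂ : ℝ → X), IsGeodesicFrom γ₁ a b → IsGeodesicFrom γ₂ a c →
    ∀ t ∈ Icc (0:ℝ) (gromovProd a b c), dist (γ₁ t) (γ₂ t) ≤ δ

/-- A subset `C` is `ρ`-separated if distinct points of `C` are at distance at least `ρ`. -/
def Separated {X : Type*} [MetricSpace X] (C : Set X) (ρ : ℝ) : Prop :=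
  ∀ c ∈ C, ∀ c' ∈ C, c ≠ c' → ρ ≤ dist c c'

open scoped ENNReal

/-- The path metric of `X ∖ B_R(p)`: the distance from `u` to `v` is the infimum of the
lengths (total variations) of continuous paths from `u` to `v` avoiding the open ball
`B_R(p)`, and `∞` if there is no such path. -/
noncomputable def pathDist {X : Type*} [MetricSpace X] (p : X) (R : ℝ) (u v : X) : ℝ≥0∞ :=
  ⨅ γ ∈ {γ : ℝ → X | ContinuousOn γ (Icc 0 1) ∧ γ 0 = u ∧ γ 1 = v ∧
      ∀ t ∈ Icc (0:ℝ) 1, R ≤ dist (γ t) p},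
    eVariationOn γ (Icc (0:ℝ) 1)

/-- The projection `π_p(a)`: the set of points in which geodesics from `p` to `a` meet the
sphere `S_p = ∂B_R(p)`. -/
def projSet {X : Type*} [MetricSpace X] (p : X) (R : ℝ) (a : X) : Set X :=
  {x : X | dist x p = R ∧
    ∃ γ : ℝ → X, IsGeodesicFrom γ p a ∧ ∃ t ∈ Icc (0:ℝ) (dist p a), γ t = x}

/-- The projection distance `d_p(a,b) = diam(π_p(a) ∪ π_p(b))`, the diameter being taken in
the path metric of `X ∖ B_R(p)`. -/
noncomputable def projDist {X : Type*} [MetricSpace X] (p : X) (R : ℝ) (a b : X) : ℝ≥0∞ :=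
  ⨆ x ∈ projSet p R a ∪ projSet p R b, ⨆ y ∈ projSet p R a ∪ projSet p R b,
    pathDist p R x y

/-!
If the Gromov product `(u,v)_p` is at least `R + δ`, then geodesics from `p` to `u` and to `v`
are still `δ`-close at distance `R + δ` from `p`. So two projection points on `S_p` are joined
outside `B_R(p)` by a path of length at most `3δ`: out along the first geodesic to radius
`R + δ`, across a geodesic of length at most `δ`, and back along the second one.
Hence `d_a(b,c) > 4δ` forces `(b,c)_a < R + δ`. Since `(b,c)_a + (a,c)_b = d(a,b) ≥ ρ ≥ 2R + 6δ`,
this gives `(a,c)_b ≥ R + δ`, and so `d_b(a,c) ≤ 3δ`.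
-/

open scoped NNReal

section Geodesic

variable {X : Type*} [MetricSpace X] {γ : ℝ → X} {x y : X}

lemma IsGeodesicFrom.dist_left (hγ : IsGeodesicFrom γ x y) {t : ℝ}
    (ht : t ∈ Icc 0 (dist x y)) : dist x (γ t) = t := by
  have h := hγ.2.2 0 ⟨le_rfl, dist_nonneg⟩ t ht
  rwa [hγ.1, zero_sub, abs_neg, abs_of_nonneg ht.1] at h

lemma IsGeodesicFrom.lipschitzOnWith_comp_affine (hγ : IsGeodesicFrom γ x y) {f : ℝ → ℝ}
    {β : ℝ} {K : ℝ≥0} (hf : ∀ t t', f t - f t' = β * (t - t')) (hβ : |β| ≤ K) {s : Set ℝ}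
    (hs : MapsTo f s (Icc 0 (dist x y))) : LipschitzOnWith K (fun t => γ (f t)) s := by
  refine LipschitzOnWith.of_dist_le_mul fun t ht t' ht' => ?_
  rw [hγ.2.2 _ (hs ht) _ (hs ht'), hf, abs_mul, Real.dist_eq]
  gcongr

end Geodesic

lemma LipschitzOnWith.ite_le {X : Type*} [PseudoMetricSpace X] {f g : ℝ → X} {K : ℝ≥0}
    {a b c : ℝ} (hf : LipschitzOnWith K f (Icc a b)) (hg : LipschitzOnWith K g (Icc b c))
    (hfg : f b = g b) : LipschitzOnWith K (fun t => if t ≤ b then f t else g t) (Icc a c) := by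
  refine LipschitzOnWith.of_dist_le_mul fun s hs t ht => ?_
  wlog hst : s ≤ t generalizing s t
  · rw [dist_comm, dist_comm s]
    exact this t ht s hs (le_of_not_ge hst)
  by_cases htb : t ≤ b
  · simp only [if_pos htb, if_pos (hst.trans htb)]
    exact hf.dist_le_mul s ⟨hs.1, hst.trans htb⟩ t ⟨ht.1, htb⟩
  by_cases hsb : s ≤ b
  · simp only [if_neg htb, if_pos hsb]
    have hb : b ∈ Icc a c := ⟨hs.1.trans hsb, (le_of_not_ge htb).trans ht.2⟩
    calc dist (f s) (g t) ≤ dist (f s) (f b) + dist (g b) (g t) := hfg ▸ dist_triangle _ _ _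
      _ ≤ K * dist s b + K * dist b t :=
        add_le_add (hf.dist_le_mul s ⟨hs.1, hsb⟩ b ⟨hb.1, le_rfl⟩)
          (hg.dist_le_mul b ⟨le_rfl, hb.2⟩ t ⟨le_of_not_ge htb, ht.2⟩)
      _ = K * dist s t := by
        simp only [Real.dist_eq]
        rw [abs_of_nonpos (by linarith), abs_of_nonpos (by linarith),
          abs_of_nonpos (by linarith)]
        ring
  · simp only [if_neg htb, if_neg hsb]
    exact hg.dist_le_mul s ⟨le_of_not_ge hsb, hs.2⟩ t ⟨le_of_not_ge htb, ht.2⟩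

lemma pathDist_le_of_lipschitzOnWith {X : Type*} [MetricSpace X] {p u v : X} {R : ℝ}
    {φ : ℝ → X} {K : ℝ≥0} (hφ : LipschitzOnWith K φ (Icc 0 1)) (h0 : φ 0 = u) (h1 : φ 1 = v)
    (hout : ∀ t ∈ Icc (0:ℝ) 1, R ≤ dist (φ t) p) : pathDist p R u v ≤ K :=
  calc pathDist p R u v ≤ eVariationOn φ (Icc 0 1) :=
        iInf₂_le φ ⟨hφ.continuousOn, h0, h1, hout⟩
    _ ≤ K * eVariationOn id (Icc (0:ℝ) 1) := hφ.comp_eVariationOn_le (mapsTo_id _)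
    _ = K := by simp

section Gromov

variable {X : Type*} [MetricSpace X]

lemma gromovProd_comm (p u v : X) : gromovProd p u v = gromovProd p v u := by
  unfold gromovProd; rw [dist_comm u v]; ring

lemma gromovProd_self (p u : X) : gromovProd p u u = dist p u := by
  unfold gromovProd; rw [dist_self]; ring

lemma gromovProd_le_dist (p u v : X) : gromovProd p u v ≤ dist p u := by
  unfold gromovProd; linarith [dist_triangle p u v]

lemma gromovProd_add_gromovProd (a b c : X) : gromovProd a b c + gromovProd b a c = dist a b := by
  unfold gromovProd; rw [dist_comm b a]; ring

end Gromov

section Projection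

variable {X : Type*} [MetricSpace X] {δ R : ℝ}

lemma exists_geodesic_of_mem_projSet {p u x : X} (hx : x ∈ projSet p R u) :
    ∃ γ : ℝ → X, IsGeodesicFrom γ p u ∧ R ∈ Icc 0 (dist p u) ∧ γ R = x := by
  obtain ⟨hxp, γ, hγ, t, ht, rfl⟩ := hx
  have hR : t = R := by rw [← hγ.dist_left ht, dist_comm, hxp]
  exact ⟨γ, hγ, hR ▸ ht, hR ▸ rfl⟩

lemma pathDist_le_of_lipschitzOnWith_thirds {g₁ g₂ g₃ : ℝ → X} {K : ℝ≥0} {p u v : X}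
    (hg₁ : LipschitzOnWith K g₁ (Icc 0 (1/3))) (hg₂ : LipschitzOnWith K g₂ (Icc (1/3) (2/3)))
    (hg₃ : LipschitzOnWith K g₃ (Icc (2/3) 1)) (h₁₂ : g₁ (1/3) = g₂ (1/3))
    (h₂₃ : g₂ (2/3) = g₃ (2/3)) (h₀ : g₁ 0 = u) (h₃ : g₃ 1 = v)
    (hout₁ : ∀ t ∈ Icc (0:ℝ) (1/3), R ≤ dist (g₁ t) p)
    (hout₂ : ∀ t ∈ Icc (1/3:ℝ) (2/3), R ≤ dist (g₂ t) p)
    (hout₃ : ∀ t ∈ Icc (2/3:ℝ) 1, R ≤ dist (g₃ t) p) :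
    pathDist p R u v ≤ K := by
  refine pathDist_le_of_lipschitzOnWith
    ((hg₁.ite_le hg₂ h₁₂).ite_le hg₃ (by rwa [if_neg (by norm_num)]))
    (by norm_num [h₀]) (by norm_num [h₃]) fun t ht => ?_
  split_ifs with h₂ h₁
  exacts [hout₁ t ⟨ht.1, h₁⟩, hout₂ t ⟨(not_le.1 h₁).le, h₂⟩, hout₃ t ⟨(not_le.1 h₂).le, ht.2⟩]

lemma pathDist_le_of_le_gromovProd (hδ : 0 ≤ δ) (hgeo : GeodesicMetricSpace X)
    (hthin : DeltaThin X δ) {p u v x y : X} (h : R + δ ≤ gromovProd p u v)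
    (hx : x ∈ projSet p R u) (hy : y ∈ projSet p R v) :
    pathDist p R x y ≤ ENNReal.ofReal (3 * δ) := by
  obtain ⟨γ₁, hγ₁, hR, rfl⟩ := exists_geodesic_of_mem_projSet hx
  obtain ⟨γ₂, hγ₂, -, rfl⟩ := exists_geodesic_of_mem_projSet hy
  have hu : R + δ ≤ dist p u := h.trans (gromovProd_le_dist p u v)
  have hv : R + δ ≤ dist p v := (gromovProd_comm p u v ▸ h).trans (gromovProd_le_dist p v u)
  have hclose : dist (γ₁ (R + δ)) (γ₂ (R + δ)) ≤ δ :=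
    hthin p u v γ₁ γ₂ hγ₁ hγ₂ (R + δ) ⟨by linarith [hR.1], h⟩
  obtain ⟨σ, hσ⟩ := hgeo (γ₁ (R + δ)) (γ₂ (R + δ))
  set L := dist (γ₁ (R + δ)) (γ₂ (R + δ))
  have hL : 0 ≤ L := dist_nonneg
  have hm₁ : MapsTo (fun t => R + 3 * δ * t) (Icc 0 (1/3)) (Icc 0 (dist p u)) :=
    fun t ht => ⟨by nlinarith [hR.1, ht.1], by nlinarith [ht.2]⟩
  have hm₂ : MapsTo (fun t => 3 * L * t - L) (Icc (1/3) (2/3)) (Icc 0 L) :=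
    fun t ht => ⟨by nlinarith [ht.1], by nlinarith [ht.2]⟩
  have hm₃ : MapsTo (fun t => R + 3 * δ - 3 * δ * t) (Icc (2/3) 1) (Icc 0 (dist p v)) :=
    fun t ht => ⟨by nlinarith [hR.1, ht.2], by nlinarith [ht.1]⟩
  have hK : (Real.toNNReal (3 * δ) : ℝ) = 3 * δ := Real.coe_toNNReal _ (by linarith)
  have hpσ : ∀ s ∈ Icc 0 L, R ≤ dist (σ s) p := fun s hs => by
    have hpu' : dist p (γ₁ (R + δ)) = R + δ := hγ₁.dist_left ⟨by linarith [hR.1], hu⟩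
    linarith [hσ.dist_left hs, hs.2, dist_triangle p (σ s) (γ₁ (R + δ)), dist_comm p (σ s),
      dist_comm (σ s) (γ₁ (R + δ))]
  refine pathDist_le_of_lipschitzOnWith_thirds
    (hγ₁.lipschitzOnWith_comp_affine (β := 3 * δ) (fun t t' => by ring)
      (by rw [hK, abs_of_nonneg (by linarith)]) hm₁)
    (hσ.lipschitzOnWith_comp_affine (β := 3 * L) (fun t t' => by ring)
      (by rw [hK, abs_of_nonneg (by positivity)]; linarith) hm₂)
    (hγ₂.lipschitzOnWith_comp_affine (β := -(3 * δ)) (fun t t' => by ring)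
      (by rw [hK, abs_neg, abs_of_nonneg (by linarith)]) hm₃)
    ?_ ?_ (by norm_num) (by norm_num) (fun t ht => ?_) (fun t ht => hpσ _ (hm₂ ht))
    (fun t ht => ?_)
  · rw [show R + 3 * δ * (1/3) = R + δ by ring, show 3 * L * (1/3) - L = 0 by ring, hσ.1]
  · rw [show 3 * L * (2/3) - L = L by ring, show R + 3 * δ - 3 * δ * (2/3) = R + δ by ring,
      hσ.2.1]
  · rw [dist_comm, hγ₁.dist_left (hm₁ ht)]
    nlinarith [ht.1]
  · rw [dist_comm, hγ₂.dist_left (hm₃ ht)]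
    nlinarith [ht.2]

lemma projDist_le_of_le_gromovProd (hδ : 0 ≤ δ) (hgeo : GeodesicMetricSpace X)
    (hthin : DeltaThin X δ) {p u v : X} (h : R + δ ≤ gromovProd p u v) :
    projDist p R u v ≤ ENNReal.ofReal (3 * δ) := by
  have h' : R + δ ≤ gromovProd p v u := gromovProd_comm p u v ▸ h
  have hu : R + δ ≤ gromovProd p u u := gromovProd_self p u ▸ h.trans (gromovProd_le_dist p u v)
  have hv : R + δ ≤ gromovProd p v v := gromovProd_self p v ▸ h'.trans (gromovProd_le_dist p v u)
  refine iSup₂_le fun x hx => iSup₂_le fun y hy => ?_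
  rcases hx with hx | hx <;> rcases hy with hy | hy
  · exact pathDist_le_of_le_gromovProd hδ hgeo hthin hu hx hy
  · exact pathDist_le_of_le_gromovProd hδ hgeo hthin h hx hy
  · exact pathDist_le_of_le_gromovProd hδ hgeo hthin h' hx hy
  · exact pathDist_le_of_le_gromovProd hδ hgeo hthin hv hx hy

end Projection

theorem statement6_general {X : Type*} [MetricSpace X]
    (δ ρ R : ℝ) (hδ : 0 < δ)
    (hgeo : GeodesicMetricSpace X) (hthin : DeltaThin X δ)
    (C : Set X) (hsep : Separated C ρ)
    (hR₂ : R ≤ ρ / 2 - 3 * δ) :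
    ∀ a ∈ C, ∀ b ∈ C, ∀ c ∈ C, a ≠ b → a ≠ c → b ≠ c →
      ENNReal.ofReal (4 * δ) < projDist a R b c →
      projDist b R a c ≤ ENNReal.ofReal (4 * δ) := by
  intro a ha b hb c hc hab _ _ hbig
  have h34 : ENNReal.ofReal (3 * δ) ≤ ENNReal.ofReal (4 * δ) :=
    ENNReal.ofReal_le_ofReal (by linarith)
  have hsmall : gromovProd a b c < R + δ := by
    by_contra! hle
    exact hbig.not_ge ((projDist_le_of_le_gromovProd hδ.le hgeo hthin hle).trans h34)
  have hlarge : R + δ ≤ gromovProd b a c := by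
    linarith [gromovProd_add_gromovProd a b c, hsep a ha b hb hab]
  exact (projDist_le_of_le_gromovProd hδ.le hgeo hthin hlarge).trans h34

/-- **The Behrstock inequality (P2)** for the associated projection distances, with
projection constant `4δ`: for pairwise distinct `a, b, c ∈ C`, if `d_a(b,c) > 4δ` then
`d_b(a,c) ≤ 4δ`. -/
theorem statement6 {X : Type*} [MetricSpace X]
    (δ ρ R : ℝ) (hδ : 0 < δ)
    (hgeo : GeodesicMetricSpace X) (hthin : DeltaThin X δ)
    (C : Set X) (hsep : Separated C ρ) (hρ : 20 * δ ≤ ρ)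
    (hR₁ : 2 + 2 * δ ≤ R) (hR₂ : R ≤ ρ / 2 - 3 * δ) :
    ∀ a ∈ C, ∀ b ∈ C, ∀ c ∈ C, a ≠ b → a ≠ c → b ≠ c →
      ENNReal.ofReal (4 * δ) < projDist a R b c →
      projDist b R a c ≤ ENNReal.ofReal (4 * δ) :=
  statement6_general δ ρ R hδ hgeo hthin C hsep hR₂
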